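/- arXiv:2501.00245 — 3 statements merged into one kernel-verified Lean document; each statement's English description precedes it below -/
import Mathlib

section
/- For real numbers a_1, ..., a_n and x_1, ..., x_n and any real x, the inequality \(\sum_{1\le i<j\le n} a_i a_j (x_i - x_j)^2 \le (\sum_{i=1}^n a_i)\, \sum_{j=1}^n a_j (x_j - x)^2\) holds whenever all a_i are nonnegative. -/
open Finset

lemma double_sum_halve {n : ℕ} (g : Fin n → Fin n → ℝ)
    (hsymm : ∀ i j, g i j = g j i) (hdiag : ∀ i, g i i = 0) :
    2 * ∑ i : Fin n, ∑ j ∈ Finset.univ.filter (fun j => i < j), g i j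
      = ∑ i : Fin n, ∑ j : Fin n, g i j := by
  have h1 : ∀ i : Fin n, ∑ j : Fin n, g i j
      = ∑ j ∈ Finset.univ.filter (fun j => i < j), g i j
        + ∑ j ∈ Finset.univ.filter (fun j => ¬ i < j), g i j := by
    intro i
    rw [Finset.sum_filter_add_sum_filter_not]
  have h2 : ∑ i : Fin n, ∑ j ∈ Finset.univ.filter (fun j => ¬ i < j), g i j
      = ∑ i : Fin n, ∑ j ∈ Finset.univ.filter (fun j => i < j), g i j := by
    have : ∀ i : Fin n, ∑ j ∈ Finset.univ.filter (fun j => ¬ i < j), g i j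
        = ∑ j : Fin n, if j ≤ i then g i j else 0 := by
      intro i
      rw [Finset.sum_filter]
      simp [not_lt]
    simp_rw [this]
    rw [Finset.sum_comm]
    have : ∀ i : Fin n, ∑ j : Fin n, (if i ≤ j then g j i else 0)
        = ∑ j ∈ Finset.univ.filter (fun j => i < j), g i j := by
      intro i
      rw [Finset.sum_filter]
      apply Finset.sum_congr rfl
      intro j _
      rcases lt_trichotomy i j with h | h | h
      · simp [le_of_lt h, h, hsymm i j]
      · subst h; simp [hdiag]
      · simp [not_le_of_gt h, not_lt_of_gt h]
    simp_rw [this]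
  calc 2 * ∑ i : Fin n, ∑ j ∈ Finset.univ.filter (fun j => i < j), g i j
      = ∑ i : Fin n, ∑ j ∈ Finset.univ.filter (fun j => i < j), g i j
        + ∑ i : Fin n, ∑ j ∈ Finset.univ.filter (fun j => ¬ i < j), g i j := by
        rw [h2]; ring
    _ = ∑ i : Fin n, ∑ j : Fin n, g i j := by
        rw [← Finset.sum_add_distrib]
        exact Finset.sum_congr rfl fun i _ => (h1 i).symm

theorem weighted_pairwise_squares_ineq (n : ℕ) (a x : Fin n → ℝ) (x₀ : ℝ)
    (ha : ∀ i, 0 ≤ a i) :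
    ∑ i : Fin n, ∑ j ∈ Finset.univ.filter (fun j => i < j),
        a i * a j * (x i - x j) ^ 2
      ≤ (∑ i : Fin n, a i) * ∑ j : Fin n, a j * (x j - x₀) ^ 2 := by
  set u : Fin n → ℝ := fun i => x i - x₀ with hu
  have hxx : ∀ i j : Fin n, x i - x j = u i - u j := by intro i j; simp [hu]
  have key : 2 * ∑ i : Fin n, ∑ j ∈ Finset.univ.filter (fun j => i < j),
      a i * a j * (x i - x j) ^ 2
      = ∑ i : Fin n, ∑ j : Fin n, a i * a j * (u i - u j) ^ 2 := by
    simp_rw [hxx]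
    exact double_sum_halve _ (fun i j => by ring) (fun i => by ring)
  have expand : ∑ i : Fin n, ∑ j : Fin n, a i * a j * (u i - u j) ^ 2
      = 2 * ((∑ i : Fin n, a i) * (∑ i : Fin n, a i * u i ^ 2)
          - (∑ i : Fin n, a i * u i) ^ 2) := by
    have : ∀ i j : Fin n, a i * a j * (u i - u j) ^ 2
        = (a i * u i ^ 2) * a j - 2 * ((a i * u i) * (a j * u j)) + a i * (a j * u j ^ 2) := by
      intro i j; ring
    simp_rw [this, Finset.sum_add_distrib, Finset.sum_sub_distrib,
      ← Finset.mul_sum, ← Finset.sum_mul]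
    ring
  have sq : 0 ≤ (∑ i : Fin n, a i * u i) ^ 2 := sq_nonneg _
  have hrhs : ∑ j : Fin n, a j * (x j - x₀) ^ 2 = ∑ i : Fin n, a i * u i ^ 2 := by
    simp [hu]
  nlinarith [key, expand, sq, hrhs]
end

section
/- Consider a sequence (β_i) of positive reals satisfying β_1 ≤ c₁N + b₁ and the recurrence β_i ≤ 1 + (1+α)/(1/β_{i-1} + 1/(c₂N + b₂ + (c₃N + b₃)γ^i)) for i ≥ 2, where α, b₁, c₁, b₂, c₂, b₃, c₃ > 0, 0 < γ < 1, and N ∈ ℕ. Then for any γ₂ with γ ≤ γ₂ < 1 and γ₂ > 1/(1+α), there exist constants α₁, α₂ > 0 (independent of i and N) such that β_i ≤ α(c₂N + b₂) + (α₁N + α₂)γ₂^i + (2+α)/α for all i ∈ ℕ and N ∈ ℕ. -/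
lemma tau_key (α γ₂ M G F K s : ℝ) (hγ₂0 : 0 < γ₂)
    (hM : 0 ≤ M) (hG : 0 ≤ G) (hF : 0 ≤ F) (hs : 0 ≤ s)
    (hK : α * K = α + 2) (hK1 : 1 ≤ K)
    (hF1 : α ^ 2 * G * γ₂ ≤ ((1 + α) * γ₂ - 1) * F)
    (hF2 : (1 + α) * G ≤ F)
    (hF3 : ((1 + α) * K + 1) * G ≤ K * F) :
    (1 + α) * ((α * M + F * s + K) * (M + G * (γ₂ * s))) ≤
      (α * M + F * (γ₂ * s) + K - 1) * ((α * M + F * s + K) + (M + G * (γ₂ * s))) := by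
  have hK0 : (0:ℝ) ≤ K := le_trans zero_le_one hK1
  have hsum : (α * M + F * (γ₂ * s) + K - 1) * ((α * M + F * s + K) + (M + G * (γ₂ * s)))
      - (1 + α) * ((α * M + F * s + K) * (M + G * (γ₂ * s)))
      = M + M * (s * (((1 + α) * γ₂ - 1) * F - α ^ 2 * G * γ₂))
        + γ₂ * s ^ 2 * F * (F - (1 + α) * G)
        + (K - 1) * F * s
        + γ₂ * s * (K * F - ((1 + α) * K + 1) * G)
        + K * (K - 1)
        + γ₂ * s * G * (F * (γ₂ * s) + K)
        + M * (α * K - (α + 2)) := by ring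
  have h1 : 0 ≤ M * (s * (((1 + α) * γ₂ - 1) * F - α ^ 2 * G * γ₂)) :=
    mul_nonneg hM (mul_nonneg hs (by linarith))
  have h2 : 0 ≤ γ₂ * s ^ 2 * F * (F - (1 + α) * G) :=
    mul_nonneg (mul_nonneg (mul_nonneg hγ₂0.le (by positivity)) hF) (by linarith)
  have h3 : 0 ≤ (K - 1) * F * s := mul_nonneg (mul_nonneg (by linarith) hF) hs
  have h4 : 0 ≤ γ₂ * s * (K * F - ((1 + α) * K + 1) * G) :=
    mul_nonneg (mul_nonneg hγ₂0.le hs) (by linarith)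
  have h5 : 0 ≤ K * (K - 1) := mul_nonneg hK0 (by linarith)
  have h6 : 0 ≤ γ₂ * s * G * (F * (γ₂ * s) + K) :=
    mul_nonneg (mul_nonneg (mul_nonneg hγ₂0.le hs) hG)
      (add_nonneg (mul_nonneg hF (mul_nonneg hγ₂0.le hs)) hK0)
  have h7 : M * (α * K - (α + 2)) = 0 := by
    rw [show α * K - (α + 2) = 0 from by linarith, mul_zero]
  linarith [hsum, h1, h2, h3, h4, h5, h6]

theorem tau_recurrent_beta (α b₁ c₁ b₂ c₂ b₃ c₃ γ : ℝ)
    (hα : 0 < α) (hb₁ : 0 < b₁) (hc₁ : 0 < c₁) (hb₂ : 0 < b₂) (hc₂ : 0 < c₂)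
    (hb₃ : 0 < b₃) (hc₃ : 0 < c₃) (hγ0 : 0 < γ) (hγ1 : γ < 1)
    (β : ℕ → ℕ → ℝ)
    (hpos : ∀ N, 1 ≤ N → ∀ i, 1 ≤ i → 0 < β N i)
    (hinit : ∀ N, 1 ≤ N → β N 1 ≤ c₁ * N + b₁)
    (hrec : ∀ N, 1 ≤ N → ∀ i, 2 ≤ i →
      β N i ≤ 1 + (1 + α) /
        (1 / β N (i - 1) + 1 / (c₂ * N + b₂ + (c₃ * N + b₃) * γ ^ i)))
    (γ₂ : ℝ) (hγ₂l : γ ≤ γ₂) (hγ₂u : γ₂ < 1) (hγ₂α : 1 / (1 + α) < γ₂) :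
    ∃ α₁ α₂ : ℝ, 0 < α₁ ∧ 0 < α₂ ∧
      ∀ N, 1 ≤ N → ∀ i, 1 ≤ i →
        β N i ≤ α * (c₂ * N + b₂) + (α₁ * N + α₂) * γ₂ ^ i + (2 + α) / α := by
  have hγ₂0 : 0 < γ₂ := lt_of_lt_of_le hγ0 hγ₂l
  have h1α : (0:ℝ) < 1 + α := by linarith
  obtain ⟨δ, hδdef⟩ : ∃ δ : ℝ, δ = (1 + α) * γ₂ - 1 := ⟨_, rfl⟩
  have hδ : 0 < δ := by
    rw [div_lt_iff₀ h1α] at hγ₂α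
    have : 1 < (1 + α) * γ₂ := by linarith [hγ₂α, mul_comm γ₂ (1 + α)]
    linarith [hδdef.ge, hδdef.le, this]
  have hδne : δ ≠ 0 := ne_of_gt hδ
  obtain ⟨Λ, hΛdef⟩ : ∃ Λ : ℝ, Λ = α ^ 2 / δ + 3 + α := ⟨_, rfl⟩
  have hΛ3 : 3 + α ≤ Λ := by
    have h1 : 0 < α ^ 2 / δ := by positivity
    rw [hΛdef]; linarith
  have hΛpos : 0 < Λ := by linarith
  have hδΛ : δ * Λ = α ^ 2 + δ * (3 + α) := by
    rw [hΛdef]; field_simp; ring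
  refine ⟨Λ * c₃ + c₁ / γ₂, Λ * b₃ + b₁ / γ₂, by positivity, by positivity, ?_⟩
  intro N hN
  have hN1 : (1:ℝ) ≤ (N:ℝ) := by exact_mod_cast hN
  have hN0 : (0:ℝ) ≤ (N:ℝ) := by linarith
  obtain ⟨M, hMdef⟩ : ∃ M : ℝ, M = c₂ * N + b₂ := ⟨_, rfl⟩
  obtain ⟨G, hGdef⟩ : ∃ G : ℝ, G = c₃ * N + b₃ := ⟨_, rfl⟩
  obtain ⟨F, hFdef⟩ : ∃ F : ℝ, F = (Λ * c₃ + c₁ / γ₂) * N + (Λ * b₃ + b₁ / γ₂) := ⟨_, rfl⟩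
  obtain ⟨K, hKdef⟩ : ∃ K : ℝ, K = (2 + α) / α := ⟨_, rfl⟩
  have hM : 0 < M := by
    rw [hMdef]; linarith [mul_nonneg hc₂.le hN0]
  have hG : 0 < G := by
    rw [hGdef]; linarith [mul_nonneg hc₃.le hN0]
  have hF : 0 < F := by
    rw [hFdef]
    have h1 : 0 < b₁ / γ₂ := by positivity
    have h2 : 0 ≤ c₁ / γ₂ := by positivity
    linarith [mul_nonneg (mul_nonneg hΛpos.le hc₃.le) hN0, mul_nonneg h2 hN0,
      mul_pos hΛpos hb₃]
  have hKeq : α * K = α + 2 := by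
    rw [hKdef, mul_div_cancel₀ _ (ne_of_gt hα)]; ring
  have hK1 : 1 ≤ K := by
    rw [hKdef, le_div_iff₀ hα]; linarith
  have hK0 : (0:ℝ) < K := lt_of_lt_of_le zero_lt_one hK1
  have hFG : Λ * G ≤ F := by
    have h1 : 0 ≤ c₁ / γ₂ := by positivity
    have h2 : 0 ≤ b₁ / γ₂ := by positivity
    rw [hFdef, hGdef]
    linarith [mul_nonneg h1 hN0]
  have hF1 : α ^ 2 * G * γ₂ ≤ ((1 + α) * γ₂ - 1) * F := by
    rw [← hδdef]
    have p1 : δ * (Λ * G) ≤ δ * F := mul_le_mul_of_nonneg_left hFG hδ.le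
    have p2 : δ * (Λ * G) = α ^ 2 * G + δ * (3 + α) * G := by
      have : δ * (Λ * G) = δ * Λ * G := by ring
      rw [this, hδΛ]; ring
    have p3 : 0 ≤ δ * (3 + α) * G := mul_nonneg (mul_nonneg hδ.le (by linarith)) hG.le
    have p4 : 0 ≤ α ^ 2 * G * (1 - γ₂) :=
      mul_nonneg (mul_nonneg (sq_nonneg α) hG.le) (by linarith)
    linarith [p1, p2, p3, p4]
  have hF2 : (1 + α) * G ≤ F := by
    have p1 : (1 + α) * G ≤ Λ * G := mul_le_mul_of_nonneg_right (by linarith) hG.le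
    linarith
  have hF3 : ((1 + α) * K + 1) * G ≤ K * F := by
    have q1 : K * (Λ * G) ≤ K * F := mul_le_mul_of_nonneg_left hFG hK0.le
    have q2 : K * ((3 + α) * G) ≤ K * (Λ * G) :=
      mul_le_mul_of_nonneg_left (mul_le_mul_of_nonneg_right hΛ3 hG.le) hK0.le
    have q3 : 0 ≤ (2 * K - 1) * G := mul_nonneg (by linarith) hG.le
    linarith [q1, q2, q3]
  intro i hi
  suffices h : β N i ≤ α * M + F * γ₂ ^ i + K by
    rw [hMdef, hFdef, hKdef] at h; exact h
  induction i, hi using Nat.le_induction with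
  | base =>
    have hinit' := hinit N hN
    have e2 : b₁ / γ₂ * γ₂ = b₁ := div_mul_cancel₀ _ (ne_of_gt hγ₂0)
    have e3 : c₁ / γ₂ * (N:ℝ) * γ₂ = c₁ * N := by
      field_simp
    rw [pow_one, hMdef, hFdef, hKdef]
    have hKpos : 0 < (2 + α) / α := by positivity
    linarith [hinit', e2, e3, mul_nonneg (mul_nonneg hα.le hc₂.le) hN0, mul_pos hα hb₂,
      mul_nonneg (mul_nonneg (mul_nonneg hΛpos.le hc₃.le) hN0) hγ₂0.le,
      mul_nonneg (mul_nonneg hΛpos.le hb₃.le) hγ₂0.le, hKpos]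
  | succ i hi ih =>
    have hβ : 0 < β N i := hpos N hN i hi
    have hrec' := hrec N hN (i + 1) (by omega)
    simp only [Nat.add_sub_cancel] at hrec'
    have hs : 0 < γ₂ ^ i := pow_pos hγ₂0 i
    obtain ⟨x, hxdef⟩ : ∃ x : ℝ, x = α * M + F * γ₂ ^ i + K := ⟨_, rfl⟩
    have hx : 0 < x := by
      rw [hxdef]; linarith [mul_pos hα hM, mul_pos hF hs]
    have hβx : β N i ≤ x := hxdef ▸ ih
    obtain ⟨y, hydef⟩ : ∃ y : ℝ, y = c₂ * N + b₂ + (c₃ * N + b₃) * γ ^ (i + 1) := ⟨_, rfl⟩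
    have hy : 0 < y := by
      rw [hydef, ← hMdef, ← hGdef]
      linarith [mul_pos hG (pow_pos hγ0 (i + 1))]
    obtain ⟨y', hy'def⟩ : ∃ y' : ℝ, y' = M + G * (γ₂ * γ₂ ^ i) := ⟨_, rfl⟩
    have hy' : 0 < y' := by
      rw [hy'def]; linarith [mul_pos hG (mul_pos hγ₂0 hs)]
    have hyy' : y ≤ y' := by
      have hpow : γ ^ (i + 1) ≤ γ₂ ^ (i + 1) := pow_le_pow_left₀ hγ0.le hγ₂l (i + 1)
      have he : γ₂ ^ (i + 1) = γ₂ * γ₂ ^ i := by rw [pow_succ]; ring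
      rw [hydef, hy'def, ← hMdef, ← hGdef, ← he]
      linarith [mul_le_mul_of_nonneg_left hpow hG.le]
    obtain ⟨T, hTdef⟩ : ∃ T : ℝ, T = α * M + F * (γ₂ * γ₂ ^ i) + K := ⟨_, rfl⟩
    have hkey : (1 + α) * (x * y') ≤ (T - 1) * (x + y') := by
      have hk := tau_key α γ₂ M G F K (γ₂ ^ i) hγ₂0 hM.le hG.le hF.le hs.le hKeq hK1 hF1 hF2 hF3
      rw [hxdef, hy'def, hTdef]
      linarith [hk]
    have hd0 : 0 < 1 / β N i + 1 / y := add_pos (one_div_pos.2 hβ) (one_div_pos.2 hy)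
    have hd1 : 0 < 1 / x + 1 / y' := add_pos (one_div_pos.2 hx) (one_div_pos.2 hy')
    have hT1 : 0 < T - 1 := by
      rw [hTdef]
      linarith [mul_pos hα hM, mul_pos hF (mul_pos hγ₂0 hs)]
    have hmono : 1 / x + 1 / y' ≤ 1 / β N i + 1 / y :=
      add_le_add (one_div_le_one_div_of_le hβ hβx) (one_div_le_one_div_of_le hy hyy')
    have hstep : (1 + α) / (1 / β N i + 1 / y) ≤ (1 + α) / (1 / x + 1 / y') := by
      rw [div_le_div_iff₀ hd0 hd1]
      exact mul_le_mul_of_nonneg_left hmono h1α.le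
    have h3 : (1 + α) ≤ (T - 1) * (1 / x + 1 / y') := by
      have hxne : x ≠ 0 := ne_of_gt hx
      have hy'ne : y' ≠ 0 := ne_of_gt hy'
      have hrw : (T - 1) * (1 / x + 1 / y') = ((T - 1) * (x + y')) / (x * y') := by
        field_simp
        all_goals ring_nf
        all_goals tauto
      rw [hrw, le_div_iff₀ (mul_pos hx hy')]
      linarith
    have h4 : (1 + α) / (1 / x + 1 / y') ≤ T - 1 := by
      rw [div_le_iff₀ hd1]
      linarith
    have hfin : β N (i + 1) ≤ T := by
      have h5 : β N (i + 1) ≤ 1 + (1 + α) / (1 / β N i + 1 / y) := by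
        rw [hydef]; exact hrec'
      linarith
    rw [hTdef] at hfin
    have he : γ₂ ^ (i + 1) = γ₂ * γ₂ ^ i := by rw [pow_succ]; ring
    rw [he]
    exact hfin
end

section
/- With e_K defined by the MILU recursion and τ_K := e_K / (e_K − Σ_{K₁∈s(K)} c_{K,K₁}) (assuming the denominator is positive), the identity τ_K = 1 + (Σ_{K₂∈s(K)} c_{K,K₂}) / (b_K + Σ_{K₁∈p(K)} c_{K,K₁}/τ_{K₁}) holds at every vertex K. -/
/-! Substituting `τ_{K₁} = e_{K₁} / (e_{K₁} - s_{K₁})`, with `s_K` the sum of `c_{K,K₂}` over the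
successors of `K`, turns each precursor term `c_{K,K₁} / τ_{K₁}` into
`c_{K,K₁} - Σ_{K₂ ∈ s(K₁)} c_{K,K₁} c_{K₁,K₂} / e_{K₁}`. Since the neighbours of `K` split into
precursors and successors, the MILU recursion then says exactly that
`b_K + Σ_{K₁ ∈ p(K)} c_{K,K₁} / τ_{K₁} = e_K - s_K`, and `e_K / (e_K - s_K) = 1 + s_K / (e_K - s_K)`. -/

open Finset

theorem Finset.sum_filter_ne_and {α M : Type*} [LinearOrder α] [AddCommMonoid M]
    (s : Finset α) (a : α) (p : α → Prop) [DecidablePred p] (f : α → M) :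
    ∑ x ∈ s.filter (fun x => x ≠ a ∧ p x), f x =
      ∑ x ∈ s.filter (fun x => x < a ∧ p x), f x + ∑ x ∈ s.filter (fun x => a < x ∧ p x), f x := by
  rw [← sum_union (disjoint_filter.2 fun x _ h₁ h₂ => h₁.1.asymm h₂.1), ← filter_or]
  congr 1
  ext x
  simp only [mem_filter, ne_iff_lt_or_gt, or_and_right]

theorem div_div_sub_eq_sub_mul_div {K : Type*} [Field K] {e : K} (he : e ≠ 0) (c s : K) :
    c / (e / (e - s)) = c - c * s / e := by
  rw [div_div_eq_mul_div]
  field_simp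

theorem lecn_identity_general (V : Type*) [Fintype V] [LinearOrder V]
    (c : V → V → ℝ) (b : V → ℝ) (e τ : V → ℝ)
    (he_pos : ∀ K, 0 < e K)
    (hrec : ∀ K, e K =
      b K + (∑ K₁ ∈ Finset.univ.filter (fun K₁ => K₁ ≠ K ∧ c K K₁ ≠ 0), c K K₁)
        - ∑ K₁ ∈ Finset.univ.filter (fun K₁ => K₁ < K ∧ c K K₁ ≠ 0),
            ∑ K₂ ∈ Finset.univ.filter (fun K₂ => K₁ < K₂ ∧ c K₁ K₂ ≠ 0),
              c K K₁ * c K₁ K₂ / e K₁)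
    (hden : ∀ K, 0 < e K - ∑ K₁ ∈ Finset.univ.filter (fun K₁ => K < K₁ ∧ c K K₁ ≠ 0), c K K₁)
    (hτ : ∀ K, τ K = e K /
      (e K - ∑ K₁ ∈ Finset.univ.filter (fun K₁ => K < K₁ ∧ c K K₁ ≠ 0), c K K₁)) :
    ∀ K, τ K = 1 +
      (∑ K₂ ∈ Finset.univ.filter (fun K₂ => K < K₂ ∧ c K K₂ ≠ 0), c K K₂) /
      (b K + ∑ K₁ ∈ Finset.univ.filter (fun K₁ => K₁ < K ∧ c K K₁ ≠ 0), c K K₁ / τ K₁) := by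
  intro K
  have hprec : ∀ K₁, c K K₁ / τ K₁ = c K K₁ -
      ∑ K₂ ∈ univ.filter (fun K₂ => K₁ < K₂ ∧ c K₁ K₂ ≠ 0), c K K₁ * c K₁ K₂ / e K₁ := by
    intro K₁
    rw [hτ K₁, div_div_sub_eq_sub_mul_div (he_pos K₁).ne', ← sum_div, ← mul_sum]
  have hdenom : b K + ∑ K₁ ∈ univ.filter (fun K₁ => K₁ < K ∧ c K K₁ ≠ 0), c K K₁ / τ K₁ =
      e K - ∑ K₂ ∈ univ.filter (fun K₂ => K < K₂ ∧ c K K₂ ≠ 0), c K K₂ := by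
    have hsplit := hrec K
    rw [sum_filter_ne_and] at hsplit
    rw [sum_congr rfl fun K₁ _ => hprec K₁, sum_sub_distrib]
    linarith
  rw [hdenom, hτ K, one_add_div (hden K).ne', sub_add_cancel]

theorem lecn_identity (V : Type*) [Fintype V] [LinearOrder V]
    (c : V → V → ℝ) (b : V → ℝ) (e τ : V → ℝ)
    (hc_symm : ∀ K K', c K K' = c K' K)
    (hc_nonneg : ∀ K K', 0 ≤ c K K')
    (hb : ∀ K, 0 ≤ b K)
    (he_pos : ∀ K, 0 < e K)
    (hrec : ∀ K, e K =
      b K + (∑ K₁ ∈ Finset.univ.filter (fun K₁ => K₁ ≠ K ∧ c K K₁ ≠ 0), c K K₁)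
        - ∑ K₁ ∈ Finset.univ.filter (fun K₁ => K₁ < K ∧ c K K₁ ≠ 0),
            ∑ K₂ ∈ Finset.univ.filter (fun K₂ => K₁ < K₂ ∧ c K₁ K₂ ≠ 0),
              c K K₁ * c K₁ K₂ / e K₁)
    (hden : ∀ K, 0 < e K - ∑ K₁ ∈ Finset.univ.filter (fun K₁ => K < K₁ ∧ c K K₁ ≠ 0), c K K₁)
    (hτ : ∀ K, τ K = e K /
      (e K - ∑ K₁ ∈ Finset.univ.filter (fun K₁ => K < K₁ ∧ c K K₁ ≠ 0), c K K₁))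
    (hden' : ∀ K,
      b K + (∑ K₁ ∈ Finset.univ.filter (fun K₁ => K₁ < K ∧ c K K₁ ≠ 0), c K K₁ / τ K₁) ≠ 0) :
    ∀ K, τ K = 1 +
      (∑ K₂ ∈ Finset.univ.filter (fun K₂ => K < K₂ ∧ c K K₂ ≠ 0), c K K₂) /
      (b K + ∑ K₁ ∈ Finset.univ.filter (fun K₁ => K₁ < K ∧ c K K₁ ≠ 0), c K K₁ / τ K₁) :=
  lecn_identity_general V c b e τ he_pos hrec hden hτ
end
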